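/- Let R be an irreducible finite crystallographic root system of rank k in ℝ^k, and let S = R ∩ V be a complete irreducible subsystem of rank r < k, where V = span(S) is an r-dimensional subspace. Then there exists a subspace V′ ⊇ V of dimension r+1 such that S′ = R ∩ V′ is an irreducible root subsystem of rank r+1 containing S. -/

import Mathlib

/-!
Pick a root `α ∉ V` and put `V' = V ⊔ ℝα`. If `V = 0`, `R ∩ V'` lies on a line and is irreducible.
Otherwise irreducibility of `R` yields a root `α` that lies neither in `V` nor in `Vᗮ`. For a
splitting `R ∩ V' ⊆ W₁ ∪ W₂`, the reflections force the roots in `W₁` to be orthogonal to those in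
`W₂`. By irreducibility of `R ∩ V`, its roots all lie on one side, say `W₁`; as `α ⊥̸ V`, `α` lies
there too, so the roots in `W₁` span `V'` and the roots in `W₂` are orthogonal to `V'`, i.e. there
are none.
-/

open scoped RealInnerProductSpace

/-- `R` is a finite crystallographic root system in the subspace `W` of
`ℝ^k`. -/
def IsRootSystemIn {k : ℕ} (W : Submodule ℝ (EuclideanSpace ℝ (Fin k)))
    (R : Set (EuclideanSpace ℝ (Fin k))) : Prop :=
  R.Finite ∧ (0 : EuclideanSpace ℝ (Fin k)) ∉ R ∧
  Submodule.span ℝ R = W ∧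
  (∀ α ∈ R, ∀ β ∈ R, β - (2 * ⟪β, α⟫ / ⟪α, α⟫) • α ∈ R) ∧
  (∀ α ∈ R, ∀ β ∈ R, ∃ m : ℤ, 2 * ⟪β, α⟫ / ⟪α, α⟫ = (m : ℝ))

/-- `R` is irreducible: it cannot be written as the union of two complete
subsystems lying in subspaces meeting only in `0`. -/
def IsIrreducibleSys {k : ℕ} (R : Set (EuclideanSpace ℝ (Fin k))) : Prop :=
  ¬ ∃ V₁ V₂ : Submodule ℝ (EuclideanSpace ℝ (Fin k)),
      V₁ ⊓ V₂ = ⊥ ∧ (R ∩ V₁).Nonempty ∧ (R ∩ V₂).Nonempty ∧ R ⊆ ↑V₁ ∪ ↑V₂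

open Submodule

section InnerProductSpace

variable {E : Type*} [NormedAddCommGroup E] [InnerProductSpace ℝ E]

lemma isOrtho_span_inter_of_subset_union {S : Set E} (h0 : (0 : E) ∉ S)
    (hrefl : ∀ α ∈ S, ∀ β ∈ S, β - (2 * ⟪β, α⟫ / ⟪α, α⟫) • α ∈ S)
    {W₁ W₂ : Submodule ℝ E} (hW : W₁ ⊓ W₂ = ⊥) (hS : S ⊆ ↑W₁ ∪ ↑W₂) :
    span ℝ (S ∩ W₁) ⟂ span ℝ (S ∩ W₂) := by
  have hdisj : ∀ x ∈ W₁, x ∈ W₂ → x = 0 := disjoint_def.mp (disjoint_iff.mpr hW)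
  refine isOrtho_span.mpr ?_
  rintro β ⟨hβS, hβ₁⟩ γ ⟨hγS, hγ₂⟩
  rw [real_inner_comm]
  by_contra hγβ
  have hβ0 : β ≠ 0 := fun h => h0 (h ▸ hβS)
  have hc : 2 * ⟪γ, β⟫ / ⟪β, β⟫ ≠ 0 :=
    div_ne_zero (mul_ne_zero two_ne_zero hγβ) (inner_self_ne_zero.mpr hβ0)
  rcases hS (hrefl β hβS γ hγS) with hδ₁ | hδ₂
  · have hγ₁ : γ ∈ W₁ := by simpa using W₁.add_mem hδ₁ (W₁.smul_mem (2 * ⟪γ, β⟫ / ⟪β, β⟫) hβ₁)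
    exact h0 (hdisj γ hγ₁ hγ₂ ▸ hγS)
  · have hβ₂ : β ∈ W₂ := (W₂.smul_mem_iff hc).mp (by simpa using W₂.sub_mem hγ₂ hδ₂)
    exact hβ0 (hdisj β hβ₁ hβ₂)

end InnerProductSpace

lemma span_inter_sup_span_singleton {E : Type*} [AddCommGroup E] [Module ℝ E] {R : Set E}
    {V : Submodule ℝ E} (hspan : span ℝ (R ∩ V) = V) {α : E} (hα : α ∈ R) :
    span ℝ (R ∩ ↑(V ⊔ ℝ ∙ α)) = V ⊔ ℝ ∙ α := by
  refine le_antisymm (span_le.mpr Set.inter_subset_right) (sup_le ?_ ?_)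
  · exact hspan.symm.le.trans
      (span_mono (Set.inter_subset_inter_right R (SetLike.coe_subset_coe.mpr le_sup_left)))
  · exact (span_singleton_le_iff_mem _ _).mpr
      (subset_span ⟨hα, mem_sup_right (mem_span_singleton_self α)⟩)

variable {k : ℕ}

lemma isRootSystemIn_inter {R : Set (EuclideanSpace ℝ (Fin k))}
    (hR : IsRootSystemIn ⊤ R) (V' : Submodule ℝ (EuclideanSpace ℝ (Fin k)))
    (hs : span ℝ (R ∩ V') = V') : IsRootSystemIn V' (R ∩ V') := by
  obtain ⟨hfin, h0, -, hrefl, hint⟩ := hR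
  refine ⟨hfin.subset Set.inter_subset_left, fun h => h0 h.1, hs, ?_, ?_⟩
  · rintro a ⟨haR, haV⟩ b ⟨hbR, hbV⟩
    exact ⟨hrefl a haR b hbR, V'.sub_mem hbV (V'.smul_mem _ haV)⟩
  · rintro a ⟨haR, -⟩ b ⟨hbR, -⟩
    exact hint a haR b hbR

lemma isIrreducibleSys_of_subset_span_singleton {S : Set (EuclideanSpace ℝ (Fin k))}
    (h0 : (0 : EuclideanSpace ℝ (Fin k)) ∉ S) {α : EuclideanSpace ℝ (Fin k)}
    (hS : S ⊆ ℝ ∙ α) : IsIrreducibleSys S := by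
  have hα_mem : ∀ {W : Submodule ℝ (EuclideanSpace ℝ (Fin k))} {x}, x ∈ S → x ∈ W → α ∈ W := by
    intro W x hx hxW
    obtain ⟨a, rfl⟩ := mem_span_singleton.mp (hS hx)
    have ha : a ≠ 0 := by rintro rfl; exact h0 (by simpa using hx)
    exact (W.smul_mem_iff ha).mp hxW
  rintro ⟨V₁, V₂, hV, ⟨x, hxS, hx₁⟩, ⟨y, hyS, hy₂⟩, -⟩
  have hα0 : α = 0 := by
    simpa [hV] using (mem_inf.mpr ⟨hα_mem hxS hx₁, hα_mem hyS hy₂⟩ : α ∈ V₁ ⊓ V₂)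
  obtain ⟨a, rfl⟩ := mem_span_singleton.mp (hS hxS)
  exact h0 (by simpa [hα0] using hxS)

lemma IsIrreducibleSys.exists_mem_notMem_orthogonal {R : Set (EuclideanSpace ℝ (Fin k))}
    (hirr : IsIrreducibleSys R) {V : Submodule ℝ (EuclideanSpace ℝ (Fin k))}
    (hRV : (R ∩ V).Nonempty) (hR : ¬ R ⊆ V) : ∃ α ∈ R, α ∉ V ∧ α ∉ Vᗮ := by
  obtain ⟨β, hβR, hβV⟩ := Set.not_subset.mp hR
  by_contra! h
  exact hirr ⟨V, Vᗮ, V.inf_orthogonal_eq_bot, hRV, ⟨β, hβR, h β hβR hβV⟩,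
    fun x hx => (em (x ∈ V)).imp id (h x hx)⟩

lemma isIrreducibleSys_inter_sup_span_singleton {R : Set (EuclideanSpace ℝ (Fin k))}
    (hR : IsRootSystemIn ⊤ R) {V : Submodule ℝ (EuclideanSpace ℝ (Fin k))}
    (hspan : span ℝ (R ∩ V) = V) (hSirr : IsIrreducibleSys (R ∩ V))
    {α : EuclideanSpace ℝ (Fin k)} (hαR : α ∈ R) (hα : α ∉ Vᗮ) :
    IsIrreducibleSys (R ∩ ↑(V ⊔ ℝ ∙ α)) := by
  set V' := V ⊔ ℝ ∙ α
  have hspan' : span ℝ (R ∩ V') = V' := span_inter_sup_span_singleton hspan hαR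
  obtain ⟨-, h0, -, hrefl, -⟩ := isRootSystemIn_inter hR V' hspan'
  rintro ⟨W₁, W₂, hW, hne₁, hne₂, hcover⟩
  wlog hV₂ : R ∩ V ∩ W₂ = ∅ generalizing W₁ W₂
  · refine this W₂ W₁ (inf_comm W₁ W₂ ▸ hW) hne₂ hne₁ (fun x hx => (hcover hx).symm) ?_
    by_contra hV₁
    exact hSirr ⟨W₁, W₂, hW, Set.nonempty_iff_ne_empty.mpr hV₁,
      Set.nonempty_iff_ne_empty.mpr hV₂, fun x hx => hcover ⟨hx.1, mem_sup_left hx.2⟩⟩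
  have hortho := isOrtho_span_inter_of_subset_union h0 hrefl hW hcover
  have hVU₁ : V ≤ span ℝ (R ∩ V' ∩ W₁) := by
    refine hspan.symm.le.trans (span_mono fun x hx => ?_)
    refine ⟨⟨hx.1, mem_sup_left hx.2⟩, ?_⟩
    exact (hcover ⟨hx.1, mem_sup_left hx.2⟩).resolve_right fun hx₂ => hV₂.subset ⟨hx, hx₂⟩
  have hα₁ : α ∈ W₁ := by
    refine (hcover ⟨hαR, mem_sup_right (mem_span_singleton_self α)⟩).resolve_right fun hα₂ => hα ?_
    have hαU₂ : α ∈ span ℝ (R ∩ V' ∩ W₂) :=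
      subset_span ⟨⟨hαR, mem_sup_right (mem_span_singleton_self α)⟩, hα₂⟩
    exact (span_singleton_le_iff_mem _ _).mp
      (isOrtho_iff_le.mp (hortho.mono hVU₁ ((span_singleton_le_iff_mem _ _).mpr hαU₂)).symm)
  have hV'U₁ : V' ≤ span ℝ (R ∩ V' ∩ W₁) :=
    sup_le hVU₁ ((span_singleton_le_iff_mem _ _).mpr
      (subset_span ⟨⟨hαR, mem_sup_right (mem_span_singleton_self α)⟩, hα₁⟩))
  have hU₂ : span ℝ (R ∩ V' ∩ W₂) = ⊥ :=
    isOrtho_self.mp (hortho.mono_left ((span_le.mpr fun x hx => hx.1.2).trans hV'U₁))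
  obtain ⟨y, hy⟩ := hne₂
  have hy0 : y = 0 := (mem_bot ℝ).mp (hU₂ ▸ subset_span hy)
  exact h0 (hy0 ▸ hy.1)

theorem stmt_17 {k r : ℕ} (R : Set (EuclideanSpace ℝ (Fin k)))
    (hR : IsRootSystemIn ⊤ R) (hirr : IsIrreducibleSys R)
    (V : Submodule ℝ (EuclideanSpace ℝ (Fin k)))
    (hrk : Module.finrank ℝ V = r) (hr : r < k)
    (hspan : Submodule.span ℝ (R ∩ V) = V)
    (hSirr : IsIrreducibleSys (R ∩ V)) :
    ∃ V' : Submodule ℝ (EuclideanSpace ℝ (Fin k)),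
      V ≤ V' ∧ Module.finrank ℝ V' = r + 1 ∧
      Submodule.span ℝ (R ∩ V') = V' ∧
      IsRootSystemIn V' (R ∩ V') ∧
      IsIrreducibleSys (R ∩ V') := by
  have hRV : ¬ R ⊆ V := fun h => by
    have hV : V = ⊤ := top_le_iff.mp (hR.2.2.1 ▸ span_le.mpr h)
    rw [hV, finrank_top, finrank_euclideanSpace_fin] at hrk
    omega
  obtain ⟨α, hαR, hαV, hirr'⟩ :
      ∃ α ∈ R, α ∉ V ∧ IsIrreducibleSys (R ∩ ↑(V ⊔ ℝ ∙ α)) := by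
    rcases eq_or_ne V ⊥ with rfl | hV
    · obtain ⟨α, hαR, hαV⟩ := Set.not_subset.mp hRV
      refine ⟨α, hαR, hαV, isIrreducibleSys_of_subset_span_singleton (α := α)
        (fun h => hR.2.1 h.1) ?_⟩
      rw [bot_sup_eq]
      exact Set.inter_subset_right
    · have hRV_ne : (R ∩ V).Nonempty :=
        Set.nonempty_iff_ne_empty.mpr fun h => hV (by rw [← hspan, h, span_empty])
      obtain ⟨α, hαR, hαV, hα⟩ := hirr.exists_mem_notMem_orthogonal hRV_ne hRV
      exact ⟨α, hαR, hαV, isIrreducibleSys_inter_sup_span_singleton hR hspan hSirr hαR hα⟩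
  have hspan' := span_inter_sup_span_singleton hspan hαR
  exact ⟨V ⊔ ℝ ∙ α, le_sup_left, hrk ▸ finrank_sup_span_singleton hαV, hspan',
    isRootSystemIn_inter hR _ hspan', hirr'⟩
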